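/- arXiv:0903.1951 — 2 statements merged into one kernel-verified Lean document; each statement's English description precedes it below -/
import Mathlib

section
/- Let $(\xi_i)$ be a stationary sequence with stationary filtration $(\mathcal{F}_i)$ and $\xi_0 \in L^2$, regular. If $\sum_{n=1}^\infty n^{-1/2} \log(n) \| \mathbf{E}(\xi_n|\mathcal{F}_0) \|_2 < \infty$ and $\sum_{n=1}^\infty n^{-1/2} \log(n) \| \xi_{-n} - \mathbf{E}(\xi_{-n}|\mathcal{F}_0) \|_2 < \infty$, then $\sum_{j\in\mathbb{Z}} \log(1+|j|) \| P_0(\xi_j) \|_2 < \infty$. -/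
/-!
By stationarity `‖P₀(ξⱼ)‖₂ = ‖P₋ⱼ(ξ₀)‖₂`, and the `Pᵢ(ξ₀)` are the orthogonal increments of the
martingale `i ↦ E(ξ₀|𝓕ᵢ)`. Pythagoras therefore bounds the sum of `‖P₀(ξⱼ)‖₂²` over `j ≥ n` by
`‖E(ξₙ|𝓕₀)‖₂²`, and over `j > n` of `‖P₀(ξ₋ⱼ)‖₂²` by `‖ξ₋ₙ - E(ξ₋ₙ|𝓕₀)‖₂²`.

Such a tail bound `∑_{k ≥ n} u_k² ≤ a_n²` turns `∑ n^{-1/2} log n · a_n < ∞` into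
`∑ log k · u_k < ∞`: by Cauchy–Schwarz the `u_k` over the window `n ≤ k < 2n` add up to at most
`√n · a_n`, and `log k` is dominated by `8 ∑ log n / n` over the `≈ k/2` windows containing `k`.
-/

open MeasureTheory Finset
open scoped ENNReal

noncomputable def Pproj {Ω : Type*} {m0 : MeasurableSpace Ω} (μ : Measure Ω)
    (ℱ : ℤ → MeasurableSpace Ω) (i : ℤ) (f : Ω → ℝ) : Ω → ℝ :=
  μ[f | ℱ i] - μ[f | ℱ (i - 1)]

theorem Finset.sum_Ico_le_of_add_le {M : Type*} [AddCommMonoid M] [PartialOrder M]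
    [IsOrderedAddMonoid M] [CanonicallyOrderedAdd M] {f s : ℕ → M}
    (h : ∀ k, f k + s (k + 1) ≤ s k) (n N : ℕ) : ∑ k ∈ Ico n N, f k ≤ s n := by
  rcases le_or_gt n N with hnN | hNn
  · suffices ∑ k ∈ Ico n N, f k + s N ≤ s n from le_of_add_le_left this
    induction N, hnN using Nat.le_induction with
    | base => simp
    | succ N hnN ih =>
      rw [sum_Ico_succ_top hnN, add_assoc]
      exact (add_le_add le_rfl (h N)).trans ih
  · simp [Ico_eq_empty_of_le hNn.le]

theorem Real.log_add_two_le_sum_Ioc_half (k : ℕ) (hk : 2 ≤ k) :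
    Real.log (k + 2) ≤ 8 * ∑ m ∈ Ioc (k / 2) k, Real.log m / m := by
  have hk' : (2 : ℝ) ≤ k := by exact_mod_cast hk
  have hlog : 0 ≤ Real.log ((k + 1) / 2) := Real.log_nonneg (by linarith)
  have hterm : ∀ m ∈ Ioc (k / 2) k, Real.log ((k + 1) / 2) / k ≤ Real.log m / m := by
    intro m hm
    rw [mem_Ioc] at hm
    have h2m : (k + 1 : ℝ) ≤ 2 * m := by exact_mod_cast (by omega : k + 1 ≤ 2 * m)
    have hmk : (m : ℝ) ≤ k := by exact_mod_cast hm.2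
    gcongr
    · exact_mod_cast (by omega : 0 < m)
    · linarith
  have hcard : (k : ℝ) / 2 ≤ #(Ioc (k / 2) k) := by
    rw [Nat.card_Ioc, div_le_iff₀ two_pos]
    exact_mod_cast (by omega : k ≤ (k - k / 2) * 2)
  have hpow : Real.log (k + 2) ≤ 4 * Real.log ((k + 1) / 2) := by
    calc Real.log (k + 2) ≤ Real.log (((k + 1) / 2) ^ 4) := by
          refine Real.log_le_log (by positivity) ?_
          nlinarith [sq_nonneg ((k : ℝ) + 1), mul_self_nonneg (((k : ℝ) + 1) ^ 2 - 9)]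
      _ = 4 * Real.log ((k + 1) / 2) := by rw [Real.log_pow]; norm_num
  calc Real.log (k + 2) ≤ 4 * Real.log ((k + 1) / 2) := hpow
    _ = 8 * ((k / 2) * (Real.log ((k + 1) / 2) / k)) := by field_simp; ring
    _ ≤ 8 * (#(Ioc (k / 2) k) * (Real.log ((k + 1) / 2) / k)) := by gcongr
    _ ≤ 8 * ∑ m ∈ Ioc (k / 2) k, Real.log m / m := by
      gcongr
      simpa [nsmul_eq_mul] using card_nsmul_le_sum _ _ _ hterm

theorem ENNReal.sum_le_card_rpow_half_mul {ι : Type*} (s : Finset ι) (u : ι → ℝ≥0∞) {a : ℝ≥0∞}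
    (h : ∑ i ∈ s, u i ^ 2 ≤ a ^ 2) : ∑ i ∈ s, u i ≤ (#s : ℝ≥0∞) ^ (1 / 2 : ℝ) * a := by
  calc ∑ i ∈ s, u i = ∑ i ∈ s, 1 * u i := by simp only [one_mul]
    _ ≤ (∑ i ∈ s, (1 : ℝ≥0∞) ^ (2 : ℝ)) ^ (1 / 2 : ℝ) * (∑ i ∈ s, u i ^ (2 : ℝ)) ^ (1 / 2 : ℝ) :=
      ENNReal.inner_le_Lp_mul_Lq s _ _ .two_two
    _ ≤ (#s : ℝ≥0∞) ^ (1 / 2 : ℝ) * (a ^ 2) ^ (1 / 2 : ℝ) := by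
      simp only [ENNReal.rpow_two, one_pow, sum_const, nsmul_eq_mul, mul_one]
      gcongr
    _ = (#s : ℝ≥0∞) ^ (1 / 2 : ℝ) * a := by
      rw [← ENNReal.rpow_natCast, ← ENNReal.rpow_mul]; norm_num

theorem ENNReal.ofReal_log_div_mul_rpow_half {m : ℕ} (hm : 0 < m) :
    ENNReal.ofReal (Real.log m / m) * (m : ℝ≥0∞) ^ (1 / 2 : ℝ)
      = (m : ℝ≥0∞) ^ (-(1 / 2) : ℝ) * ENNReal.ofReal (Real.log m) := by
  have h0 : (m : ℝ≥0∞) ≠ 0 := by exact_mod_cast hm.ne'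
  rw [ENNReal.ofReal_div_of_pos (by exact_mod_cast hm), ENNReal.ofReal_natCast, div_eq_mul_inv,
    ← ENNReal.rpow_neg_one, mul_assoc, ← ENNReal.rpow_add _ _ h0 (ENNReal.natCast_ne_top m)]
  norm_num [mul_comm]

theorem ENNReal.tsum_sum_Ioc_half_mul (c u : ℕ → ℝ≥0∞) :
    ∑' k, (∑ m ∈ Ioc (k / 2) k, c m) * u k = ∑' m, c m * ∑ k ∈ Ico m (2 * m), u k := by
  have hmem : ∀ k m, m ∈ Ioc (k / 2) k ↔ k ∈ Ico m (2 * m) := fun k m => by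
    simp only [mem_Ioc, mem_Ico]; omega
  calc ∑' k, (∑ m ∈ Ioc (k / 2) k, c m) * u k
      = ∑' k, ∑' m, if k ∈ Ico m (2 * m) then c m * u k else 0 := by
        refine tsum_congr fun k => ?_
        rw [sum_mul, sum_eq_tsum_indicator]
        simp only [Set.indicator_apply, mem_coe, hmem]
    _ = ∑' m, c m * ∑ k ∈ Ico m (2 * m), u k := by
        rw [ENNReal.tsum_comm]
        refine tsum_congr fun m => ?_
        rw [mul_sum, sum_eq_tsum_indicator]
        simp only [Set.indicator_apply, mem_coe]

theorem ENNReal.tsum_ofReal_log_mul_lt_top {u a : ℕ → ℝ≥0∞} (hu : ∀ k, u k ≠ ∞)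
    (htail : ∀ n N, ∑ k ∈ Ico n N, u k ^ 2 ≤ a n ^ 2)
    (ha : ∑' n : ℕ, ((n : ℝ≥0∞) + 1) ^ (-(1 / 2 : ℝ)) * ENNReal.ofReal (Real.log ((n : ℝ) + 1)) *
      a (n + 1) < ∞) :
    ∑' k : ℕ, ENNReal.ofReal (Real.log (k + 2)) * u k < ∞ := by
  set c : ℕ → ℝ≥0∞ := fun m => ENNReal.ofReal (Real.log m / m)
  have hlog : ∀ k : ℕ, 2 ≤ k → ENNReal.ofReal (Real.log (k + 2)) ≤ 8 * ∑ m ∈ Ioc (k / 2) k, c m :=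
    fun k hk => by
      rw [← ENNReal.ofReal_ofNat, ← ENNReal.ofReal_sum_of_nonneg fun m _ => by positivity,
        ← ENNReal.ofReal_mul (by norm_num)]
      exact ENNReal.ofReal_le_ofReal (Real.log_add_two_le_sum_Ioc_half k hk)
  have hwin : ∀ n, c (n + 1) * ∑ k ∈ Ico (n + 1) (2 * (n + 1)), u k ≤
      ((n : ℝ≥0∞) + 1) ^ (-(1 / 2 : ℝ)) * ENNReal.ofReal (Real.log ((n : ℝ) + 1)) * a (n + 1) :=
    fun n => calc
      _ ≤ c (n + 1) * ((#(Ico (n + 1) (2 * (n + 1))) : ℝ≥0∞) ^ (1 / 2 : ℝ) * a (n + 1)) := by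
          gcongr
          exact ENNReal.sum_le_card_rpow_half_mul _ u (htail _ _)
      _ = _ := by
          rw [Nat.card_Ico, show 2 * (n + 1) - (n + 1) = n + 1 by omega, ← mul_assoc,
            ENNReal.ofReal_log_div_mul_rpow_half n.succ_pos]
          push_cast; rfl
  -- `k = 0` lies in no window `[m, 2m)` and `k = 1` only in one of weight `log 1 = 0`: these two
  -- terms are controlled by `hu` alone.
  calc ∑' k : ℕ, ENNReal.ofReal (Real.log (k + 2)) * u k
      = ∑ k ∈ range 2, ENNReal.ofReal (Real.log (k + 2)) * u k
          + ∑' k : ℕ, ENNReal.ofReal (Real.log ((k + 2 : ℕ) + 2)) * u (k + 2) :=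
        (ENNReal.summable.sum_add_tsum_nat_add').symm
    _ ≤ ∑ k ∈ range 2, ENNReal.ofReal (Real.log (k + 2)) * u k
          + 8 * ∑' k, (∑ m ∈ Ioc (k / 2) k, c m) * u k := by
        gcongr
        rw [← ENNReal.tsum_mul_left]
        refine (ENNReal.tsum_le_tsum fun k => ?_).trans
          (ENNReal.tsum_comp_le_tsum_of_injective (add_left_injective 2) _)
        rw [← mul_assoc]
        exact mul_le_mul_left (hlog (k + 2) (by omega)) _
    _ = ∑ k ∈ range 2, ENNReal.ofReal (Real.log (k + 2)) * u k
          + 8 * ∑' n, c (n + 1) * ∑ k ∈ Ico (n + 1) (2 * (n + 1)), u k := by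
        rw [ENNReal.tsum_sum_Ioc_half_mul, tsum_eq_zero_add' ENNReal.summable]
        simp
    _ < ∞ := by
        refine ENNReal.add_lt_top.2 ⟨?_, ENNReal.mul_lt_top (by norm_num)
          ((ENNReal.tsum_le_tsum hwin).trans_lt ha)⟩
        exact ENNReal.sum_lt_top.2 fun k _ => ENNReal.mul_lt_top ENNReal.ofReal_lt_top (hu k).lt_top

section Pythagoras

variable {α : Type*} {m m' m0 : MeasurableSpace α} {μ : Measure α} [IsFiniteMeasure μ]
  {g : α → ℝ}

theorem eLpNorm_condExp_sq_add_eLpNorm_sub_condExp_sq (hm : m ≤ m0) (hg : MemLp g 2 μ) :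
    eLpNorm (μ[g|m]) 2 μ ^ 2 + eLpNorm (g - μ[g|m]) 2 μ ^ 2 = eLpNorm g 2 μ ^ 2 := by
  have : Fact (m ≤ m0) := ⟨hm⟩
  have hE : ((condExpL2 ℝ ℝ hm (hg.toLp g) : α →₂[μ] ℝ) : α → ℝ) =ᵐ[μ] μ[g|m] :=
    hg.condExpL2_ae_eq_condExp hm
  have hpy := (lpMeas ℝ ℝ m 2 μ).norm_sq_eq_add_norm_sq_projection (hg.toLp g)
  -- `condExpL2` is by definition this orthogonal projection
  have h1 : ‖(lpMeas ℝ ℝ m 2 μ).orthogonalProjectionOnto (hg.toLp g)‖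
      = (eLpNorm (μ[g|m]) 2 μ).toReal := by
    rw [← eLpNorm_congr_ae hE]; rfl
  have h2 : ‖(lpMeas ℝ ℝ m 2 μ)ᗮ.orthogonalProjectionOnto (hg.toLp g)‖
      = (eLpNorm (g - μ[g|m]) 2 μ).toReal := by
    rw [Submodule.orthogonalProjectionOnto_orthogonal, Submodule.coe_norm, Lp.norm_def]
    refine congrArg ENNReal.toReal (eLpNorm_congr_ae ?_)
    filter_upwards [Lp.coeFn_sub (hg.toLp g) ((lpMeas ℝ ℝ m 2 μ).starProjection (hg.toLp g)),
      hg.coeFn_toLp, hE] with a h₁ h₂ h₃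
    rw [h₁, Pi.sub_apply, Pi.sub_apply, h₂, ← h₃]
    rfl
  rw [Lp.norm_toLp, h1, h2] at hpy
  have hfin : ∀ {f : α → ℝ}, MemLp f 2 μ → eLpNorm f 2 μ ^ 2 ≠ ∞ := fun hf =>
    ENNReal.pow_ne_top hf.eLpNorm_ne_top
  have hE2 := hfin (hg.condExp (m := m) one_le_two)
  have hsub2 := hfin (hg.sub (hg.condExp (m := m) one_le_two))
  rw [← ENNReal.toReal_eq_toReal_iff' (ENNReal.add_ne_top.2 ⟨hE2, hsub2⟩) (hfin hg),
    ENNReal.toReal_add hE2 hsub2]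
  simpa only [ENNReal.toReal_pow] using hpy.symm

theorem eLpNorm_condExp_sub_condExp_sq_add_eLpNorm_condExp_sq (hm' : m' ≤ m) (hm : m ≤ m0)
    (hg : MemLp g 2 μ) :
    eLpNorm (μ[g|m] - μ[g|m']) 2 μ ^ 2 + eLpNorm (μ[g|m']) 2 μ ^ 2 = eLpNorm (μ[g|m]) 2 μ ^ 2 := by
  have htower : μ[μ[g|m]|m'] =ᵐ[μ] μ[g|m'] := condExp_condExp_of_le hm' hm
  rw [← eLpNorm_congr_ae htower, ← eLpNorm_congr_ae ((ae_eq_refl (μ[g|m])).sub htower), add_comm]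
  exact eLpNorm_condExp_sq_add_eLpNorm_sub_condExp_sq (hm'.trans hm) (hg.condExp one_le_two)

theorem eLpNorm_condExp_sub_condExp_sq_add_eLpNorm_sub_condExp_sq (hm' : m' ≤ m) (hm : m ≤ m0)
    (hg : MemLp g 2 μ) :
    eLpNorm (μ[g|m] - μ[g|m']) 2 μ ^ 2 + eLpNorm (g - μ[g|m]) 2 μ ^ 2
      = eLpNorm (g - μ[g|m']) 2 μ ^ 2 := by
  have hg' : MemLp (g - μ[g|m']) 2 μ := hg.sub (hg.condExp one_le_two)
  have hproj : μ[g - μ[g|m']|m] =ᵐ[μ] μ[g|m] - μ[g|m'] := by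
    filter_upwards [condExp_sub (hg.integrable one_le_two) integrable_condExp m] with a ha
    rw [ha, Pi.sub_apply, Pi.sub_apply,
      condExp_of_stronglyMeasurable hm (stronglyMeasurable_condExp.mono hm') integrable_condExp]
  have hres : g - μ[g|m'] - μ[g - μ[g|m']|m] =ᵐ[μ] g - μ[g|m] := by
    filter_upwards [hproj] with a ha
    simp only [Pi.sub_apply, ha]; ring
  rw [← eLpNorm_congr_ae hproj, ← eLpNorm_congr_ae hres]
  exact eLpNorm_condExp_sq_add_eLpNorm_sub_condExp_sq hm hg'

end Pythagoras

section Filtration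

variable {α : Type*} {m0 : MeasurableSpace α} {μ : Measure α} [IsFiniteMeasure μ]
  {ℱ : ℤ → MeasurableSpace α} {g : α → ℝ}

theorem sum_Ico_eLpNorm_pproj_neg_sq_le (hℱmono : Monotone ℱ) (hℱle : ∀ i, ℱ i ≤ m0)
    (hg : MemLp g 2 μ) (n N : ℕ) :
    ∑ k ∈ Ico n N, eLpNorm (Pproj μ ℱ (-k) g) 2 μ ^ 2 ≤ eLpNorm (μ[g|ℱ (-n)]) 2 μ ^ 2 := by
  refine sum_Ico_le_of_add_le (s := fun k : ℕ => eLpNorm (μ[g|ℱ (-k)]) 2 μ ^ 2)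
    (fun k => le_of_eq ?_) n N
  rw [Nat.cast_succ, neg_add', Pproj]
  exact eLpNorm_condExp_sub_condExp_sq_add_eLpNorm_condExp_sq (hℱmono (by omega)) (hℱle _) hg

theorem sum_Ico_eLpNorm_pproj_add_one_sq_le (hℱmono : Monotone ℱ) (hℱle : ∀ i, ℱ i ≤ m0)
    (hg : MemLp g 2 μ) (n N : ℕ) :
    ∑ k ∈ Ico n N, eLpNorm (Pproj μ ℱ (k + 1) g) 2 μ ^ 2 ≤ eLpNorm (g - μ[g|ℱ n]) 2 μ ^ 2 := by
  refine sum_Ico_le_of_add_le (s := fun k : ℕ => eLpNorm (g - μ[g|ℱ k]) 2 μ ^ 2)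
    (fun k => le_of_eq ?_) n N
  rw [Nat.cast_succ, Pproj, add_sub_cancel_right]
  exact eLpNorm_condExp_sub_condExp_sq_add_eLpNorm_sub_condExp_sq (hℱmono (by omega)) (hℱle _) hg

end Filtration

theorem condExp_comp_ae_eq_comp_condExp {α β : Type*} {m0 : MeasurableSpace α} {μ : Measure α}
    [IsFiniteMeasure μ] {m mβ : MeasurableSpace β} {ν : Measure β} {e : α → β}
    (he : MeasurePreserving e μ ν) (hemb : MeasurableEmbedding e) (hm : m ≤ mβ) {g : β → ℝ}
    (hg : Integrable g ν) :
    μ[g ∘ e | m.comap e] =ᵐ[μ] ν[g | m] ∘ e := by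
  have : IsFiniteMeasure ν := he.map_eq ▸ inferInstance
  have hm' : m.comap e ≤ m0 := (MeasurableSpace.comap_mono hm).trans he.measurable.comap_le
  refine (ae_eq_condExp_of_forall_setIntegral_eq hm' ((he.integrable_comp_emb hemb).2 hg)
    (fun s _ _ => ((he.integrable_comp_emb hemb).2 integrable_condExp).integrableOn)
    (fun s hs _ => ?_) ?_).symm
  · obtain ⟨t, ht, rfl⟩ := hs
    rw [Function.comp_def, Function.comp_def, he.setIntegral_preimage_emb hemb,
      he.setIntegral_preimage_emb hemb]
    exact setIntegral_condExp hm hg ht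
  · exact (stronglyMeasurable_condExp.comp_measurable (comap_measurable e)).aestronglyMeasurable

theorem measurableEmbedding_of_map_add {Ω : Type*} {m0 : MeasurableSpace Ω} {T : ℤ → Ω → Ω}
    (hT0 : T 0 = id) (hTadd : ∀ i j : ℤ, ∀ ω, T (i + j) ω = T i (T j ω))
    (hT : ∀ i, Measurable (T i)) (j : ℤ) : MeasurableEmbedding (T j) :=
  MeasurableEquiv.measurableEmbedding
    { toFun := T j
      invFun := T (-j)
      left_inv := fun ω => by rw [← hTadd, neg_add_cancel, hT0, id]
      right_inv := fun ω => by rw [← hTadd, add_neg_cancel, hT0, id]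
      measurable_toFun := hT j
      measurable_invFun := hT (-j) }

theorem comap_eq_comap_sub_of_map_add {Ω : Type*} {T : ℤ → Ω → Ω}
    (hTadd : ∀ i j : ℤ, ∀ ω, T (i + j) ω = T i (T j ω)) {F0 : MeasurableSpace Ω}
    {ℱ : ℤ → MeasurableSpace Ω} (hℱdef : ∀ i, ℱ i = F0.comap (T i)) (i j : ℤ) :
    ℱ i = (ℱ (i - j)).comap (T j) := by
  rw [hℱdef, hℱdef, MeasurableSpace.comap_comp]
  congr 1
  funext ω
  rw [Function.comp_apply, ← hTadd, sub_add_cancel]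

section Shift

variable {Ω : Type*} {m0 : MeasurableSpace Ω} {μ : Measure Ω} [IsFiniteMeasure μ]
  {e : Ω → Ω} {ℱ : ℤ → MeasurableSpace Ω} {j : ℤ} {g : Ω → ℝ} {p : ℝ≥0∞}

theorem condExp_comp_ae_eq_of_comap_eq (he : MeasurePreserving e μ μ)
    (hemb : MeasurableEmbedding e) (hℱ : ∀ i, ℱ i = (ℱ (i - j)).comap e) (hℱle : ∀ i, ℱ i ≤ m0)
    (hg : Integrable g μ) (i : ℤ) :
    μ[fun ω => g (e ω) | ℱ i] =ᵐ[μ] fun ω => μ[g | ℱ (i - j)] (e ω) := by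
  rw [hℱ i]
  exact condExp_comp_ae_eq_comp_condExp he hemb (hℱle _) hg

theorem eLpNorm_condExp_comp_of_comap_eq (he : MeasurePreserving e μ μ)
    (hemb : MeasurableEmbedding e) (hℱ : ∀ i, ℱ i = (ℱ (i - j)).comap e) (hℱle : ∀ i, ℱ i ≤ m0)
    (hg : Integrable g μ) (i : ℤ) :
    eLpNorm (μ[fun ω => g (e ω) | ℱ i]) p μ = eLpNorm (μ[g | ℱ (i - j)]) p μ := by
  rw [eLpNorm_congr_ae (condExp_comp_ae_eq_of_comap_eq he hemb hℱ hℱle hg i)]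
  exact eLpNorm_comp_measurePreserving integrable_condExp.aestronglyMeasurable he

theorem eLpNorm_sub_condExp_comp_of_comap_eq (he : MeasurePreserving e μ μ)
    (hemb : MeasurableEmbedding e) (hℱ : ∀ i, ℱ i = (ℱ (i - j)).comap e) (hℱle : ∀ i, ℱ i ≤ m0)
    (hg : Integrable g μ) (i : ℤ) :
    eLpNorm (fun ω => g (e ω) - μ[fun ω => g (e ω) | ℱ i] ω) p μ
      = eLpNorm (g - μ[g | ℱ (i - j)]) p μ := by
  refine (eLpNorm_congr_ae ?_).trans
    (eLpNorm_comp_measurePreserving (hg.sub integrable_condExp).aestronglyMeasurable he)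
  exact (ae_eq_refl _).sub (condExp_comp_ae_eq_of_comap_eq he hemb hℱ hℱle hg i)

theorem eLpNorm_pproj_comp_of_comap_eq (he : MeasurePreserving e μ μ)
    (hemb : MeasurableEmbedding e) (hℱ : ∀ i, ℱ i = (ℱ (i - j)).comap e) (hℱle : ∀ i, ℱ i ≤ m0)
    (hg : Integrable g μ) (i : ℤ) :
    eLpNorm (Pproj μ ℱ i fun ω => g (e ω)) p μ = eLpNorm (Pproj μ ℱ (i - j) g) p μ := by
  have h := (condExp_comp_ae_eq_of_comap_eq he hemb hℱ hℱle hg i).sub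
    (condExp_comp_ae_eq_of_comap_eq he hemb hℱ hℱle hg (i - 1))
  rw [sub_right_comm] at h
  rw [Pproj, eLpNorm_congr_ae h]
  exact eLpNorm_comp_measurePreserving
    (integrable_condExp.sub integrable_condExp).aestronglyMeasurable he

end Shift

theorem stmt_7_general {Ω : Type*} {m0 : MeasurableSpace Ω} (μ : Measure Ω) [IsProbabilityMeasure μ]
    (T : ℤ → Ω → Ω) (hT0 : T 0 = id) (hTadd : ∀ i j : ℤ, ∀ ω, T (i + j) ω = T i (T j ω))
    (hTmp : ∀ i, MeasurePreserving (T i) μ μ)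
    (F0 : MeasurableSpace Ω)
    (ℱ : ℤ → MeasurableSpace Ω) (hℱdef : ∀ i, ℱ i = MeasurableSpace.comap (T i) F0)
    (hℱmono : Monotone ℱ) (hℱle : ∀ i, ℱ i ≤ m0)
    (ξ0 : Ω → ℝ)
    (hL2 : MeasureTheory.MemLp ξ0 2 μ)
    (h1 : ∑' n : ℕ, ((n : ℝ≥0∞) + 1) ^ (-(1 / 2 : ℝ)) *
        ENNReal.ofReal (Real.log ((n : ℝ) + 1)) *
        eLpNorm (μ[fun ω => ξ0 (T ((n : ℤ) + 1) ω) | ℱ 0]) 2 μ < ⊤)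
    (h2 : ∑' n : ℕ, ((n : ℝ≥0∞) + 1) ^ (-(1 / 2 : ℝ)) *
        ENNReal.ofReal (Real.log ((n : ℝ) + 1)) *
        eLpNorm
          (fun ω => ξ0 (T (-((n : ℤ) + 1)) ω) -
            (μ[fun ω' => ξ0 (T (-((n : ℤ) + 1)) ω') | ℱ 0]) ω) 2 μ < ⊤) :
    ∑' j : ℤ, ENNReal.ofReal (Real.log (1 + |(j : ℤ)|)) *
        eLpNorm (Pproj μ ℱ 0 (fun ω => ξ0 (T j ω))) 2 μ < ⊤ := by
  have hshift : ∀ j i, ℱ i = (ℱ (i - j)).comap (T j) := fun j i =>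
    comap_eq_comap_sub_of_map_add hTadd hℱdef i j
  -- otherwise `F0` would be found as the `MeasurableSpace Ω` instance
  clear hℱdef F0
  have hemb := measurableEmbedding_of_map_add hT0 hTadd fun i => (hTmp i).measurable
  have hint := hL2.integrable one_le_two
  have hfin : ∀ i, eLpNorm (Pproj μ ℱ i ξ0) 2 μ ≠ ∞ := fun i =>
    ((hL2.condExp one_le_two).sub (hL2.condExp one_le_two)).eLpNorm_ne_top
  rw [tsum_of_nat_of_neg_add_one ENNReal.summable ENNReal.summable, ENNReal.add_lt_top]
  constructor
  · refine (ENNReal.tsum_le_tsum fun n => ?_).trans_lt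
      (ENNReal.tsum_ofReal_log_mul_lt_top (fun k => hfin (-k))
        (sum_Ico_eLpNorm_pproj_neg_sq_le hℱmono hℱle hL2)
        ((tsum_congr fun n => ?_).trans_lt h1))
    · rw [eLpNorm_pproj_comp_of_comap_eq (hTmp n) (hemb n) (hshift n) hℱle hint 0, zero_sub]
      gcongr ENNReal.ofReal (Real.log ?_) * _
      simp only [Int.cast_abs, Int.cast_natCast, abs_of_nonneg (Nat.cast_nonneg (α := ℝ) n)]
      linarith
    · rw [eLpNorm_condExp_comp_of_comap_eq (hTmp _) (hemb _) (hshift _) hℱle hint 0, zero_sub,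
        Nat.cast_succ]
  · refine (ENNReal.tsum_le_tsum fun n => ?_).trans_lt
      (ENNReal.tsum_ofReal_log_mul_lt_top (fun k => hfin (k + 1))
        (sum_Ico_eLpNorm_pproj_add_one_sq_le hℱmono hℱle hL2)
        ((tsum_congr fun n => ?_).trans_lt h2))
    · rw [eLpNorm_pproj_comp_of_comap_eq (hTmp _) (hemb _) (hshift _) hℱle hint 0,
        zero_sub, neg_neg]
      gcongr ENNReal.ofReal (Real.log ?_) * _
      rw [abs_neg, abs_of_nonneg (by positivity)]
      push_cast
      linarith
    · rw [eLpNorm_sub_condExp_comp_of_comap_eq (hTmp _) (hemb _) (hshift _) hℱle hint 0,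
        zero_sub, neg_neg, Nat.cast_succ]

/-- Remark 8 of the paper: under the logarithmic projective conditions
`∑ n^{-1/2} log n ‖E(ξ_n|𝓕_0)‖₂ < ∞` and `∑ n^{-1/2} log n ‖ξ_{-n} - E(ξ_{-n}|𝓕_0)‖₂ < ∞`,
one has `∑_{j∈ℤ} log(1+|j|) ‖P_0(ξ_j)‖₂ < ∞`. -/
theorem stmt_7 {Ω : Type*} {m0 : MeasurableSpace Ω} (μ : Measure Ω) [IsProbabilityMeasure μ]
    (T : ℤ → Ω → Ω) (hT0 : T 0 = id) (hTadd : ∀ i j : ℤ, ∀ ω, T (i + j) ω = T i (T j ω))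
    (hTmp : ∀ i, MeasurePreserving (T i) μ μ)
    (F0 : MeasurableSpace Ω)
    (ℱ : ℤ → MeasurableSpace Ω) (hℱdef : ∀ i, ℱ i = MeasurableSpace.comap (T i) F0)
    (hℱmono : Monotone ℱ) (hℱle : ∀ i, ℱ i ≤ m0)
    (ξ0 : Ω → ℝ)
    (hL2 : MeasureTheory.MemLp ξ0 2 μ)
    (hreg : μ[ξ0 | ⨅ n : ℕ, ℱ (-(n : ℤ))] =ᵐ[μ] 0)
    (hmeas : StronglyMeasurable[⨆ i : ℤ, ℱ i] ξ0)
    (h1 : ∑' n : ℕ, ((n : ℝ≥0∞) + 1) ^ (-(1 / 2 : ℝ)) *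
        ENNReal.ofReal (Real.log ((n : ℝ) + 1)) *
        eLpNorm (μ[fun ω => ξ0 (T ((n : ℤ) + 1) ω) | ℱ 0]) 2 μ < ⊤)
    (h2 : ∑' n : ℕ, ((n : ℝ≥0∞) + 1) ^ (-(1 / 2 : ℝ)) *
        ENNReal.ofReal (Real.log ((n : ℝ) + 1)) *
        eLpNorm
          (fun ω => ξ0 (T (-((n : ℤ) + 1)) ω) -
            (μ[fun ω' => ξ0 (T (-((n : ℤ) + 1)) ω') | ℱ 0]) ω) 2 μ < ⊤) :
    ∑' j : ℤ, ENNReal.ofReal (Real.log (1 + |(j : ℤ)|)) *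
        eLpNorm (Pproj μ ℱ 0 (fun ω => ξ0 (T j ω))) 2 μ < ⊤ :=
  stmt_7_general μ T hT0 hTadd hTmp F0 ℱ hℱdef hℱmono hℱle ξ0 hL2 h1 h2
end

section
/- Let $m \ge 1$ and let $(\xi_k)$ be stationary with $\sum_{j\in\mathbb{Z}} \|P_0(\xi_j)\|_2 < \infty$, and set $d_0 = \sum_{k\in\mathbb{Z}} P_0(\xi_k)$ (convergent in $L^2$) and $\theta_{0,m} = \sum_{k=0}^{2m-2} \sum_{i=k-m+1}^{m-1} P_i(\xi_k)$. Then the identity $\xi_0 - d_0 = d_0 \circ T^m - d_0 + \theta_{0,m} - \theta_{0,m}\circ T + \sum_{|i|\ge m} P_i(\xi_0) - \big( \sum_{|k|\ge m} P_0(\xi_k) \big) \circ T^m$ holds in $L^2$. -/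
open MeasureTheory Filter
open scoped ENNReal

open Finset
open scoped Topology

/-!
Regularity together with the `L¹`-summability of the projections gives `ξ₀ = ∑ᵢ Pᵢ ξ₀` a.e.:
the upper end is Lévy's upward theorem, and at the lower end `E(ξ₀|𝓕₋ₙ)` is forced to
converge a.e. by the summable increments, its limit being `E(ξ₀|𝓕₋∞) = 0`.
Stationarity gives `Pᵢ(ξₖ) = P₀(ξₖ₋ᵢ) ∘ Tⁱ`; after the substitution `j = k - i` the double sum
`θ₀,ₘ - θ₀,ₘ ∘ T` telescopes in `i` to `∑_{|j|<m} (P₀(ξⱼ) ∘ T⁻ʲ - P₀(ξⱼ) ∘ Tᵐ)`, and the identity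
follows by cutting the series for `ξ₀` and for `d₀ ∘ Tᵐ` at `|i| = m`.
-/

theorem Finset.sum_Icc_int_sub {M : Type*} [AddCommGroup M] (f : ℤ → M) {a b : ℤ}
    (hab : a - 1 ≤ b) : ∑ i ∈ Icc a b, (f i - f (i - 1)) = f b - f (a - 1) := by
  induction b, hab using Int.leInduction with
  | base => simp
  | succ n hn ih =>
    rw [← insert_Icc_right_eq_Icc_add_one (by omega), sum_insert (by simp), ih,
      add_sub_cancel_right]
    abel

theorem tsum_ite_le_abs {E : Type*} [AddCommGroup E] [TopologicalSpace E]
    [IsTopologicalAddGroup E] [T2Space E] {f : ℤ → E} (hf : Summable f) (m : ℤ) :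
    (∑' i : ℤ, if m ≤ |i| then f i else 0) = ∑' i, f i - ∑ i ∈ Icc (1 - m) (m - 1), f i := by
  have hcompl : {i : ℤ | m ≤ |i|} = (↑(Icc (1 - m) (m - 1)) : Set ℤ)ᶜ := by
    ext i
    simp only [Set.mem_ofPred_eq, Set.mem_compl_iff, coe_Icc, Set.mem_Icc]
    rcases abs_cases i with ⟨h, _⟩ | ⟨h, _⟩ <;> omega
  rw [eq_sub_iff_add_eq', ← hf.sum_add_tsum_compl (s := Icc (1 - m) (m - 1)), ← hcompl,
    _root_.tsum_subtype]
  simp only [Set.indicator_apply, Set.mem_ofPred_eq]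

theorem sum_sub_shift_diagonal (m : ℕ) (s : ℤ → ℤ → ℝ) :
    ∑ k ∈ range (2 * m - 1), ∑ i ∈ Icc ((k : ℤ) - m + 1) (m - 1),
        (s (k - i) i - s (k - i) (i + 1))
      = ∑ i ∈ Icc (1 - (m : ℤ)) (m - 1), s (-i) i - ∑ j ∈ Icc (1 - (m : ℤ)) (m - 1), s j m := by
  have hdiag : ∑ k ∈ range (2 * m - 1), ∑ i ∈ Icc ((k : ℤ) - m + 1) (m - 1),
        (s (k - i) i - s (k - i) (i + 1))
      = ∑ j ∈ Icc (1 - (m : ℤ)) (m - 1), ∑ i ∈ Icc (-j) (m - 1), (s j i - s j (i + 1)) := by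
    rw [sum_sigma', sum_sigma']
    refine sum_nbij' (fun p => ⟨p.1 - p.2, p.2⟩) (fun p => ⟨(p.1 + p.2).toNat, p.2⟩)
      ?_ ?_ ?_ ?_ (fun _ _ => rfl)
    all_goals
      rintro ⟨k, i⟩
      simp only [mem_sigma, mem_range, mem_Icc, Sigma.mk.injEq, heq_eq_eq, and_true]
      omega
  have htel : ∀ j ∈ Icc (1 - (m : ℤ)) (m - 1),
      ∑ i ∈ Icc (-j) (m - 1), (s j i - s j (i + 1)) = s j (-j) - s j m := by
    intro j hj
    rw [mem_Icc] at hj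
    have := sum_Icc_int_sub (fun i => -s j (i + 1)) (a := -j) (b := m - 1) (by omega)
    simp only [sub_add_cancel, neg_sub_neg] at this
    rw [this]
  have hneg : ∑ j ∈ Icc (1 - (m : ℤ)) (m - 1), s j (-j)
      = ∑ i ∈ Icc (1 - (m : ℤ)) (m - 1), s (-i) i := by
    refine sum_nbij' (fun j => -j) (fun i => -i) ?_ ?_ (fun j _ => neg_neg j) (fun i _ => neg_neg i)
      (fun j _ => by rw [neg_neg])
    all_goals
      intro j hj
      rw [mem_Icc] at hj ⊢
      omega
  rw [hdiag, sum_congr rfl htel, sum_sub_distrib, hneg]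

theorem tendsto_sub_tsum_of_summable_sub {u : ℕ → ℝ} (hu : Summable fun n => u n - u (n + 1)) :
    Tendsto u atTop (𝓝 (u 0 - ∑' n, (u n - u (n + 1)))) :=
  (hu.hasSum.tendsto_sum_nat.const_sub (u 0)).congr fun n => by rw [sum_range_sub', sub_sub_cancel]

theorem tendsto_limsup_of_summable_sub {u : ℕ → ℝ} (hu : Summable fun n => u n - u (n + 1)) :
    Tendsto u atTop (𝓝 (limsup u atTop)) := by
  have hlim := tendsto_sub_tsum_of_summable_sub hu
  rwa [hlim.limsup_eq]

theorem sub_limsup_eq_tsum_of_summable_sub {u : ℕ → ℝ} (hu : Summable fun n => u n - u (n + 1))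
    (n : ℕ) : u n - limsup u atTop = ∑' j, (u (j + n) - u (j + n + 1)) := by
  rw [(tendsto_sub_tsum_of_summable_sub hu).limsup_eq, ← hu.sum_add_tsum_nat_add n,
    sum_range_sub']
  ring

noncomputable def theta {Ω : Type*} {m0 : MeasurableSpace Ω} (μ : Measure Ω)
    (ℱ : ℤ → MeasurableSpace Ω) (T : ℤ → Ω → Ω) (g : Ω → ℝ) (m : ℕ) (ω : Ω) : ℝ :=
  ∑ k ∈ range (2 * m - 1), ∑ i ∈ Icc ((k : ℤ) - m + 1) (m - 1), Pproj μ ℱ i (fun ω' => g (T k ω')) ω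

section

variable {Ω : Type*} {m0 : MeasurableSpace Ω} {μ : Measure Ω}

theorem eLpNorm_one_tsum_le {ι E : Type*} [Countable ι] [NormedAddCommGroup E] {F : ι → Ω → E}
    (hF : ∀ i, AEStronglyMeasurable (F i) μ) :
    eLpNorm (fun ω => ∑' i, F i ω) 1 μ ≤ ∑' i, eLpNorm (F i) 1 μ := by
  simp only [eLpNorm_one_eq_lintegral_enorm]
  calc ∫⁻ ω, ‖∑' i, F i ω‖ₑ ∂μ ≤ ∫⁻ ω, ∑' i, ‖F i ω‖ₑ ∂μ :=
        lintegral_mono fun ω => enorm_tsum_le_tsum_enorm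
    _ = ∑' i, ∫⁻ ω, ‖F i ω‖ₑ ∂μ := lintegral_tsum fun i => (hF i).enorm

theorem measurable_iInf_limsup {𝒢 : ℕ → MeasurableSpace Ω} (h𝒢 : Antitone 𝒢) {u : ℕ → Ω → ℝ}
    (hu : ∀ n, Measurable[𝒢 n] (u n)) :
    Measurable[⨅ n, 𝒢 n] fun ω => limsup (fun n => u n ω) atTop := by
  refine measurable_iff_comap_le.2 (le_iInf fun k => measurable_iff_comap_le.1 ?_)
  have hshift : (fun ω => limsup (fun n => u n ω) atTop)
      = fun ω => limsup (fun n => u (n + k) ω) atTop := funext fun ω => (limsup_nat_add _ k).symm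
  rw [hshift]
  exact Measurable.limsup fun n => (hu (n + k)).mono (h𝒢 (Nat.le_add_left k n)) le_rfl

theorem eLpNorm_limsup_sub_le {g : ℕ → Ω → ℝ} (hgm : ∀ n, AEStronglyMeasurable (g n) μ)
    (hg : ∀ᵐ ω ∂μ, Summable fun n => g n ω - g (n + 1) ω) (n : ℕ) :
    eLpNorm ((fun ω => limsup (g · ω) atTop) - g n) 1 μ
      ≤ ∑' j, eLpNorm (g (j + n) - g (j + n + 1)) 1 μ := by
  have hneg : (fun ω => limsup (g · ω) atTop) - g n
      =ᵐ[μ] -fun ω => ∑' j, (g (j + n) - g (j + n + 1)) ω := by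
    filter_upwards [hg] with ω hω
    simp only [Pi.sub_apply, Pi.neg_apply, ← sub_limsup_eq_tsum_of_summable_sub hω n, neg_sub]
  rw [eLpNorm_congr_ae hneg, eLpNorm_neg]
  exact eLpNorm_one_tsum_le fun j => (hgm (j + n)).sub (hgm (j + n + 1))

theorem MeasureTheory.MeasurePreserving.condExp_comp_ae_eq {Ω' : Type*} {𝒢 m0' : MeasurableSpace Ω'}
    {ν : Measure Ω'} [IsFiniteMeasure μ] [IsFiniteMeasure ν] {τ : Ω → Ω'}
    (hτ : MeasurePreserving τ μ ν) (h𝒢 : 𝒢 ≤ m0') {g : Ω' → ℝ}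
    (hg : Integrable g ν) : ν[g|𝒢] ∘ τ =ᵐ[μ] μ[g ∘ τ|𝒢.comap τ] := by
  have hle : 𝒢.comap τ ≤ m0 := (MeasurableSpace.comap_mono h𝒢).trans hτ.measurable.comap_le
  refine ae_eq_condExp_of_forall_setIntegral_eq hle (hτ.integrable_comp_of_integrable hg)
    (fun s _ _ => (hτ.integrable_comp_of_integrable integrable_condExp).integrableOn) ?_
    (stronglyMeasurable_condExp.comp_measurable (comap_measurable τ)).aestronglyMeasurable
  rintro _ ⟨t, ht, rfl⟩ _
  have hmap : ∀ F : Ω' → ℝ, AEStronglyMeasurable F ν →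
      ∫ x in τ ⁻¹' t, F (τ x) ∂μ = ∫ y in t, F y ∂ν := fun F hF => by
    rw [← hτ.map_eq] at hF ⊢
    exact (setIntegral_map (h𝒢 t ht) hF hτ.aemeasurable).symm
  simp only [Function.comp_apply]
  rw [hmap _ integrable_condExp.aestronglyMeasurable, hmap _ hg.aestronglyMeasurable,
    setIntegral_condExp h𝒢 hg ht]

theorem integrable_Pproj {ℱ : ℤ → MeasurableSpace Ω} {i : ℤ} {f : Ω → ℝ} :
    Integrable (Pproj μ ℱ i f) μ :=
  integrable_condExp.sub integrable_condExp

theorem Pproj_comp_ae_eq [IsFiniteMeasure μ] {ℱ : ℤ → MeasurableSpace Ω} (hℱle : ∀ i, ℱ i ≤ m0)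
    {τ : Ω → Ω} (hτ : MeasurePreserving τ μ μ) {j : ℤ} (hshift : ∀ i, ℱ (i + j) = (ℱ i).comap τ)
    {g : Ω → ℝ} (hg : Integrable g μ) (i : ℤ) :
    Pproj μ ℱ (i + j) (g ∘ τ) =ᵐ[μ] Pproj μ ℱ i g ∘ τ := by
  have h₁ := hτ.condExp_comp_ae_eq (hℱle i) hg
  have h₂ := hτ.condExp_comp_ae_eq (hℱle (i - 1)) hg
  rw [← hshift] at h₁ h₂
  rw [sub_add_eq_add_sub] at h₂
  rw [Pproj, Pproj]
  exact (h₁.sub h₂).symm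

-- Lévy's downward theorem, in the case of `L¹`-summable increments: the a.e. limit `limsup` is
-- `⨅ n, 𝒢 n`-measurable and `L¹`-close to `μ[f|𝒢 n]`, which forces it to be `μ[f|⨅ n, 𝒢 n]`.
theorem ae_tendsto_condExp_iInf_of_summable [IsFiniteMeasure μ] {𝒢 : ℕ → MeasurableSpace Ω}
    (h𝒢 : Antitone 𝒢) (h𝒢le : ∀ n, 𝒢 n ≤ m0) {f : Ω → ℝ}
    (hsum : ∑' n, eLpNorm (μ[f|𝒢 n] - μ[f|𝒢 (n + 1)]) 1 μ ≠ ∞) :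
    ∀ᵐ ω ∂μ, Tendsto (fun n => μ[f|𝒢 n] ω) atTop (𝓝 (μ[f|⨅ n, 𝒢 n] ω)) := by
  set g : ℕ → Ω → ℝ := fun n => μ[f|𝒢 n]
  have hle : ⨅ n, 𝒢 n ≤ m0 := (iInf_le 𝒢 0).trans (h𝒢le 0)
  have hgm : ∀ n, AEStronglyMeasurable (g n) μ := fun n => integrable_condExp.aestronglyMeasurable
  have hsummable : ∀ᵐ ω ∂μ, Summable fun n => g n ω - g (n + 1) ω :=
    (summable_norm_of_tsum_eLpNorm_ne_top le_rfl (fun n => (hgm n).sub (hgm (n + 1))) hsum).mono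
      fun ω hω => hω.of_norm
  set h : Ω → ℝ := fun ω => limsup (g · ω) atTop
  have hhm : StronglyMeasurable[⨅ n, 𝒢 n] h :=
    (measurable_iInf_limsup h𝒢 fun n => stronglyMeasurable_condExp.measurable).stronglyMeasurable
  have htail := eLpNorm_limsup_sub_le hgm hsummable
  have hhint : Integrable h μ := by
    have hmem : MemLp (h - g 0) 1 μ :=
      ⟨(hhm.mono hle).aestronglyMeasurable.sub (hgm 0),
        (htail 0).trans_lt (by simpa using hsum.lt_top)⟩
    exact ((memLp_one_iff_integrable.1 hmem).add integrable_condExp).congr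
      (.of_eq (sub_add_cancel h (g 0)))
  have hcond : ∀ n, h - μ[f|⨅ n, 𝒢 n] =ᵐ[μ] μ[h - g n|⨅ n, 𝒢 n] := by
    intro n
    filter_upwards [condExp_sub hhint integrable_condExp (⨅ n, 𝒢 n),
      condExp_condExp_of_le (f := f) (iInf_le (fun n => 𝒢 n) n) (h𝒢le n)] with ω h₁ h₂
    rw [h₁, Pi.sub_apply, Pi.sub_apply, h₂, condExp_of_stronglyMeasurable hle hhm hhint]
  have hzero : eLpNorm (h - μ[f|⨅ n, 𝒢 n]) 1 μ = 0 :=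
    le_antisymm (ge_of_tendsto' (ENNReal.tendsto_sum_nat_add _ hsum) fun n =>
      (eLpNorm_congr_ae (hcond n)).trans_le
        ((eLpNorm_condExp_le_eLpNorm _ le_rfl).trans (htail n))) bot_le
  have hae := (eLpNorm_eq_zero_iff ((hhm.mono hle).aestronglyMeasurable.sub
    integrable_condExp.aestronglyMeasurable) one_ne_zero).1 hzero
  filter_upwards [hsummable, hae] with ω hω hω'
  rw [← sub_eq_zero.1 hω']
  exact tendsto_limsup_of_summable_sub hω

theorem ae_tendsto_condExp_of_monotone_int [IsFiniteMeasure μ] {ℱ : ℤ → MeasurableSpace Ω}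
    (hℱ : Monotone ℱ) (hℱle : ∀ i, ℱ i ≤ m0) {f : Ω → ℝ} (hf : Integrable f μ)
    (hfm : StronglyMeasurable[⨆ i, ℱ i] f) :
    ∀ᵐ ω ∂μ, Tendsto (fun n : ℕ => μ[f|ℱ n] ω) atTop (𝓝 (f ω)) := by
  let ℱℕ : Filtration ℕ m0 := ⟨fun n => ℱ n, fun _ _ h => hℱ (by exact_mod_cast h), fun _ => hℱle _⟩
  have hsup : ⨆ n, ℱℕ n = ⨆ i, ℱ i :=
    le_antisymm (iSup_le fun n => le_iSup ℱ _) (iSup_le fun i =>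
      (hℱ (Int.self_le_toNat i)).trans (le_iSup (fun n : ℕ => ℱ n) i.toNat))
  exact hf.tendsto_ae_condExp (ℱ := ℱℕ) (hsup ▸ hfm)

theorem ae_hasSum_Pproj [IsFiniteMeasure μ] {ℱ : ℤ → MeasurableSpace Ω} (hℱ : Monotone ℱ)
    (hℱle : ∀ i, ℱ i ≤ m0) {f : Ω → ℝ} (hf : Integrable f μ)
    (hfm : StronglyMeasurable[⨆ i, ℱ i] f) (hreg : μ[f | ⨅ n : ℕ, ℱ (-(n : ℤ))] =ᵐ[μ] 0)
    (hsum : ∑' i, eLpNorm (Pproj μ ℱ i f) 1 μ ≠ ∞) :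
    ∀ᵐ ω ∂μ, HasSum (fun i => Pproj μ ℱ i f ω) (f ω) := by
  have hPsum : ∀ᵐ ω ∂μ, Summable fun i => Pproj μ ℱ i f ω :=
    (summable_norm_of_tsum_eLpNorm_ne_top le_rfl (fun i => integrable_Pproj.aestronglyMeasurable)
      hsum).mono fun ω hω => hω.of_norm
  have hdiff : ∀ n : ℕ, μ[f|ℱ (-(n : ℤ))] - μ[f|ℱ (-((n + 1 : ℕ) : ℤ))] = Pproj μ ℱ (-n) f := by
    intro n
    rw [Pproj, Nat.cast_succ, neg_add']
  have hdown_sum : ∑' n : ℕ, eLpNorm (μ[f|ℱ (-(n : ℤ))] - μ[f|ℱ (-((n + 1 : ℕ) : ℤ))]) 1 μ ≠ ∞ := by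
    simp_rw [hdiff]
    exact ne_top_of_le_ne_top hsum (ENNReal.tsum_comp_le_tsum_of_injective
      (fun a b h => by simpa using h) _)
  have hdown : ∀ᵐ ω ∂μ, Tendsto (fun n : ℕ => μ[f|ℱ (-(n : ℤ))] ω) atTop (𝓝 0) := by
    filter_upwards [ae_tendsto_condExp_iInf_of_summable (fun a b hab => hℱ (by omega))
      (fun n => hℱle _) hdown_sum, hreg] with ω hω h0
    rwa [h0] at hω
  filter_upwards [hPsum, ae_tendsto_condExp_of_monotone_int hℱ hℱle hf hfm, hdown]
    with ω hs hup hdn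
  have hpartial : ∀ n : ℕ, ∑ i ∈ Icc (-(n : ℤ)) n, Pproj μ ℱ i f ω
      = μ[f|ℱ n] ω - μ[f|ℱ (-((n + 1 : ℕ) : ℤ))] ω := by
    intro n
    simp only [Pproj, Pi.sub_apply]
    rw [sum_Icc_int_sub (fun i => μ[f|ℱ i] ω) (by omega), Nat.cast_succ, neg_add']
  have hlim := (hup.sub (hdn.comp (tendsto_add_atTop_nat 1))).congr fun n => (hpartial n).symm
  rw [sub_zero] at hlim
  have hS := hs.hasSum
  rwa [tendsto_nhds_unique (hS.comp tendsto_Icc_neg) hlim] at hS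

theorem Pproj_shift_ae_eq [IsFiniteMeasure μ] {T : ℤ → Ω → Ω}
    (hTadd : ∀ i j : ℤ, ∀ ω, T (i + j) ω = T i (T j ω)) (hTmp : ∀ i, MeasurePreserving (T i) μ μ)
    {ℱ : ℤ → MeasurableSpace Ω} (hℱT : ∀ a i, ℱ (a + i) = (ℱ a).comap (T i))
    (hℱle : ∀ i, ℱ i ≤ m0) {g : Ω → ℝ}
    (hg : Integrable g μ) (i k : ℤ) :
    Pproj μ ℱ i (fun ω => g (T k ω))
      =ᵐ[μ] fun ω => Pproj μ ℱ 0 (fun ω' => g (T (k - i) ω')) (T i ω) := by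
  have hcomp : (fun ω => g (T k ω)) = (fun ω => g (T (k - i) ω)) ∘ T i :=
    funext fun ω => by rw [Function.comp_apply, ← hTadd, sub_add_cancel]
  have := Pproj_comp_ae_eq hℱle (hTmp i) (hℱT · i) (g := fun ω => g (T (k - i) ω))
    ((hTmp (k - i)).integrable_comp_of_integrable hg) 0
  rwa [zero_add, ← hcomp] at this

theorem tsum_eLpNorm_Pproj_eq [IsFiniteMeasure μ] {T : ℤ → Ω → Ω} (hT0 : T 0 = id)
    (hTadd : ∀ i j : ℤ, ∀ ω, T (i + j) ω = T i (T j ω)) (hTmp : ∀ i, MeasurePreserving (T i) μ μ)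
    {ℱ : ℤ → MeasurableSpace Ω} (hℱT : ∀ a i, ℱ (a + i) = (ℱ a).comap (T i))
    (hℱle : ∀ i, ℱ i ≤ m0) {g : Ω → ℝ}
    (hg : Integrable g μ) (p : ℝ≥0∞) :
    ∑' i, eLpNorm (Pproj μ ℱ i g) p μ = ∑' k, eLpNorm (Pproj μ ℱ 0 (fun ω => g (T k ω))) p μ := by
  have hnorm : ∀ i, eLpNorm (Pproj μ ℱ i g) p μ
      = eLpNorm (Pproj μ ℱ 0 (fun ω => g (T (-i) ω))) p μ := fun i => by
    have hstat := Pproj_shift_ae_eq hTadd hTmp hℱT hℱle hg i 0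
    simp only [hT0, id, zero_sub] at hstat
    rw [eLpNorm_congr_ae hstat]
    exact eLpNorm_comp_measurePreserving integrable_Pproj.aestronglyMeasurable (hTmp i)
  rw [tsum_congr hnorm]
  exact (Equiv.neg ℤ).tsum_eq fun k => eLpNorm (Pproj μ ℱ 0 (fun ω => g (T k ω))) p μ

theorem ae_theta_sub_theta_comp [IsFiniteMeasure μ] {T : ℤ → Ω → Ω} (hT0 : T 0 = id)
    (hTadd : ∀ i j : ℤ, ∀ ω, T (i + j) ω = T i (T j ω)) (hTmp : ∀ i, MeasurePreserving (T i) μ μ)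
    {ℱ : ℤ → MeasurableSpace Ω} (hℱT : ∀ a i, ℱ (a + i) = (ℱ a).comap (T i))
    (hℱle : ∀ i, ℱ i ≤ m0) {g : Ω → ℝ} (hg : Integrable g μ) (m : ℕ) :
    ∀ᵐ ω ∂μ, theta μ ℱ T g m ω - theta μ ℱ T g m (T 1 ω)
      = ∑ i ∈ Icc (1 - (m : ℤ)) (m - 1), Pproj μ ℱ i g ω
        - ∑ k ∈ Icc (1 - (m : ℤ)) (m - 1), Pproj μ ℱ 0 (fun ω' => g (T k ω')) (T m ω) := by
  set S : ℤ → Ω → ℝ := fun k => Pproj μ ℱ 0 (fun ω => g (T k ω))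
  have hstat : ∀ i k : ℤ,
      Pproj μ ℱ i (fun ω => g (T k ω)) =ᵐ[μ] fun ω => S (k - i) (T i ω) :=
    Pproj_shift_ae_eq hTadd hTmp hℱT hℱle hg
  have hstat_comp : ∀ i k : ℤ, (fun ω => Pproj μ ℱ i (fun ω' => g (T k ω')) (T 1 ω))
      =ᵐ[μ] fun ω => S (k - i) (T (i + 1) ω) := fun i k => by
    filter_upwards [(hTmp 1).quasiMeasurePreserving.ae_eq (hstat i k)] with ω h
    rw [hTadd]
    exact h
  filter_upwards [ae_all_iff.2 fun i => ae_all_iff.2 (hstat i),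
    ae_all_iff.2 fun i => ae_all_iff.2 (hstat_comp i)] with ω hω hω_comp
  have hP0 : ∀ i, Pproj μ ℱ i g ω = S (-i) (T i ω) := fun i => by
    simpa only [hT0, id, zero_sub] using hω i 0
  simpa only [theta, hP0, hω, hω_comp, ← sum_sub_distrib] using
    sum_sub_shift_diagonal m fun j i => S j (T i ω)

end

theorem stmt_16_general {Ω : Type*} {m0 : MeasurableSpace Ω} (μ : Measure Ω) [IsProbabilityMeasure μ]
    (T : ℤ → Ω → Ω) (hT0 : T 0 = id) (hTadd : ∀ i j : ℤ, ∀ ω, T (i + j) ω = T i (T j ω))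
    (hTmp : ∀ i, MeasurePreserving (T i) μ μ)
    (F0 : MeasurableSpace Ω)
    (ℱ : ℤ → MeasurableSpace Ω) (hℱdef : ∀ i, ℱ i = MeasurableSpace.comap (T i) F0)
    (hℱmono : Monotone ℱ) (hℱle : ∀ i, ℱ i ≤ m0)
    (ξ0 : Ω → ℝ)
    (hL2 : MeasureTheory.MemLp ξ0 2 μ)
    (hreg : μ[ξ0 | ⨅ n : ℕ, ℱ (-(n : ℤ))] =ᵐ[μ] 0)
    (hmeas : StronglyMeasurable[⨆ i : ℤ, ℱ i] ξ0)
    (hsum : ∑' j : ℤ, eLpNorm (Pproj μ ℱ 0 (fun ω => ξ0 (T j ω))) 2 μ < ⊤)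
    (m : ℕ)
    (d0 : Ω → ℝ)
    (hd0 : ∀ ω, d0 ω = ∑' k : ℤ, Pproj μ ℱ 0 (fun ω' => ξ0 (T k ω')) ω)
    (θ : Ω → ℝ)
    (hθ : ∀ ω, θ ω = ∑ k ∈ Finset.range (2 * m - 1),
        ∑ i ∈ Finset.Icc ((k : ℤ) - (m : ℤ) + 1) ((m : ℤ) - 1),
          Pproj μ ℱ i (fun ω' => ξ0 (T (k : ℤ) ω')) ω) :
    (fun ω => ξ0 ω - d0 ω) =ᵐ[μ]
      (fun ω =>
        d0 (T (m : ℤ) ω) - d0 ω + θ ω - θ (T 1 ω) +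
          (∑' i : ℤ, if (m : ℤ) ≤ |i| then Pproj μ ℱ i ξ0 ω else 0) -
          ∑' k : ℤ, if (m : ℤ) ≤ |k|
            then Pproj μ ℱ 0 (fun ω' => ξ0 (T k ω')) (T (m : ℤ) ω) else 0) := by
  obtain rfl : θ = theta μ ℱ T ξ0 m := funext hθ
  have hξ : Integrable ξ0 μ := hL2.integrable one_le_two
  have hℱT : ∀ a i, ℱ (a + i) = (ℱ a).comap (T i) := fun a i => by
    rw [hℱdef, hℱdef, MeasurableSpace.comap_comp]
    exact congrArg (MeasurableSpace.comap · F0) (funext (hTadd a i))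
  -- otherwise `F0` is picked up as the `MeasurableSpace Ω` instance
  clear hℱdef F0
  have hsum₁ : ∑' i, eLpNorm (Pproj μ ℱ i ξ0) 1 μ ≠ ∞ :=
    ne_top_of_le_ne_top (tsum_eLpNorm_Pproj_eq hT0 hTadd hTmp hℱT hℱle hξ 2 ▸ hsum.ne)
      (ENNReal.tsum_le_tsum fun i => eLpNorm_le_eLpNorm_of_exponent_le one_le_two
        integrable_Pproj.aestronglyMeasurable)
  have hS : ∀ᵐ ω ∂μ, Summable fun k => Pproj μ ℱ 0 (fun ω' => ξ0 (T k ω')) ω :=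
    (summable_norm_of_tsum_eLpNorm_ne_top one_le_two
      (fun k => integrable_Pproj.aestronglyMeasurable) hsum.ne).mono fun _ h => h.of_norm
  filter_upwards [ae_hasSum_Pproj hℱmono hℱle hξ hmeas hreg hsum₁,
    (hTmp m).quasiMeasurePreserving.ae
      (p := fun ω => Summable fun k => Pproj μ ℱ 0 (fun ω' => ξ0 (T k ω')) ω) hS,
    ae_theta_sub_theta_comp hT0 hTadd hTmp hℱT hℱle hξ m] with ω hP hSm hθω
  rw [tsum_ite_le_abs hP.summable, hP.tsum_eq, tsum_ite_le_abs hSm, ← hd0]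
  linear_combination -hθω

/-- The martingale–coboundary decomposition (equation (14) of the paper):
`ξ_0 - d_0 = d_0∘T^m - d_0 + θ_{0,m} - θ_{0,m}∘T + ∑_{|i|≥m} P_i(ξ_0)
  - (∑_{|k|≥m} P_0(ξ_k))∘T^m` almost everywhere. -/
theorem stmt_16 {Ω : Type*} {m0 : MeasurableSpace Ω} (μ : Measure Ω) [IsProbabilityMeasure μ]
    (T : ℤ → Ω → Ω) (hT0 : T 0 = id) (hTadd : ∀ i j : ℤ, ∀ ω, T (i + j) ω = T i (T j ω))
    (hTmp : ∀ i, MeasurePreserving (T i) μ μ)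
    (F0 : MeasurableSpace Ω)
    (ℱ : ℤ → MeasurableSpace Ω) (hℱdef : ∀ i, ℱ i = MeasurableSpace.comap (T i) F0)
    (hℱmono : Monotone ℱ) (hℱle : ∀ i, ℱ i ≤ m0)
    (ξ0 : Ω → ℝ)
    (hL2 : MeasureTheory.MemLp ξ0 2 μ)
    (hreg : μ[ξ0 | ⨅ n : ℕ, ℱ (-(n : ℤ))] =ᵐ[μ] 0)
    (hmeas : StronglyMeasurable[⨆ i : ℤ, ℱ i] ξ0)
    (hsum : ∑' j : ℤ, eLpNorm (Pproj μ ℱ 0 (fun ω => ξ0 (T j ω))) 2 μ < ⊤)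
    (m : ℕ) (hm : 1 ≤ m)
    (d0 : Ω → ℝ)
    (hd0 : ∀ ω, d0 ω = ∑' k : ℤ, Pproj μ ℱ 0 (fun ω' => ξ0 (T k ω')) ω)
    (θ : Ω → ℝ)
    (hθ : ∀ ω, θ ω = ∑ k ∈ Finset.range (2 * m - 1),
        ∑ i ∈ Finset.Icc ((k : ℤ) - (m : ℤ) + 1) ((m : ℤ) - 1),
          Pproj μ ℱ i (fun ω' => ξ0 (T (k : ℤ) ω')) ω) :
    (fun ω => ξ0 ω - d0 ω) =ᵐ[μ]
      (fun ω =>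
        d0 (T (m : ℤ) ω) - d0 ω + θ ω - θ (T 1 ω) +
          (∑' i : ℤ, if (m : ℤ) ≤ |i| then Pproj μ ℱ i ξ0 ω else 0) -
          ∑' k : ℤ, if (m : ℤ) ≤ |k|
            then Pproj μ ℱ 0 (fun ω' => ξ0 (T k ω')) (T (m : ℤ) ω) else 0) :=
  stmt_16_general μ T hT0 hTadd hTmp F0 ℱ hℱdef hℱmono hℱle ξ0 hL2 hreg hmeas hsum m d0 hd0 θ hθ
end
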